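/- arXiv:1605.07663 — 5 statements merged into one kernel-verified Lean document; each statement's English description precedes it below -/
import Mathlib

section
/- (Proposition 1) Let Y_nmi, Y_mi be {0,1}-valued random variables and D a nonnegative random variable such that Y_nmi is independent of (Y_mi, 1_{D > 0}), P(Y_mi = 1, D = 0) = 0, and Y_obs = min(Y_nmi + Y_mi, 1). Assume P(D = 0) > 0, P(D > 0) > 0, P(Y_obs = 1) > 0, and P(Y_obs = 1 | D > 0) > 0. Define p_f = P(D > 0 | Y_obs = 1) and R = P(Y_obs = 1 | D > 0) / P(Y_obs = 1 | D = 0), assuming P(Y_obs = 1 | D = 0) > 0. Then p_f * (R - 1)/R = P(Y_nmi = 0, Y_mi = 1 | Y_obs = 1), i.e., the relative-risk estimand equals the MAFF. -/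
/-!
Write `A = {Y_nmi = 1}`, `B = {Y_mi = 1}` and `P = {D > 0}`, so that `{Y_obs = 1} = A ∪ B`.
Since `B ∩ {D = 0}` is null and `A` is independent of `P`,
`P(Y_obs = 1, D = 0) = P(A) P(D = 0)` and `P(Y_obs = 1, D > 0) = P(A) P(D > 0) + P(Aᶜ ∩ B)`.
Hence `R = 1 + P(Aᶜ ∩ B) / (P(A) P(D > 0))`, and `p_f (R - 1) / R = P(Aᶜ ∩ B) / P(Y_obs = 1)`,
where `Aᶜ ∩ B = {Y_nmi = 0, Y_mi = 1, Y_obs = 1}`.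
-/

open MeasureTheory ProbabilityTheory

section Events

variable {Ω : Type*} [MeasurableSpace Ω] {μ : Measure Ω} {A B P : Set Ω}

theorem measure_union_inter_compl_of_inter_compl_null (hBP : μ (B ∩ Pᶜ) = 0) :
    μ ((A ∪ B) ∩ Pᶜ) = μ (A ∩ Pᶜ) := by
  rw [Set.union_inter_distrib_right]
  exact measure_congr (union_ae_eq_left_of_ae_eq_empty (ae_eq_empty.2 hBP))

theorem measure_union_inter_of_inter_compl_null (hA : MeasurableSet A) (hBP : μ (B ∩ Pᶜ) = 0) :
    μ ((A ∪ B) ∩ P) = μ (A ∩ P) + μ (Aᶜ ∩ B) := by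
  have hB : μ (Aᶜ ∩ B ∩ P) = μ (Aᶜ ∩ B) :=
    measure_inter_conull'
      (measure_mono_null (Set.inter_subset_inter_left _ Set.inter_subset_right) hBP)
  rw [← measure_inter_add_sdiff _ hA, ← hB]
  congr 2 <;> ext ω <;> simp only [Set.mem_inter_iff, Set.mem_union, Set.mem_sdiff,
    Set.mem_compl_iff] <;> tauto

theorem ProbabilityTheory.IndepFun.measure_inter_setOf_eq_mul {α : Type*} [MeasurableSpace α]
    {X : Ω → α} {p : Ω → Prop} [DecidablePred p]
    (h : IndepFun X (fun ω => if p ω then (1 : ℕ) else 0) μ)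
    {s : Set α} (hs : MeasurableSet s) :
    μ (X ⁻¹' s ∩ {ω | p ω}) = μ (X ⁻¹' s) * μ {ω | p ω} ∧
      μ (X ⁻¹' s ∩ {ω | p ω}ᶜ) = μ (X ⁻¹' s) * μ {ω | p ω}ᶜ := by
  have hpre (n : ℕ) (hn : n ≤ 1) : (fun ω => if p ω then (1 : ℕ) else 0) ⁻¹' {n}
      = {ω | p ω ↔ n = 1} := by
    ext ω; by_cases hp : p ω <;> simp [hp] <;> omega
  constructor
  · simpa [hpre 1] using h.measure_inter_preimage_eq_mul s {1} hs .of_discrete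
  · simpa [hpre 0, Set.compl_ofPred] using h.measure_inter_preimage_eq_mul s {0} hs .of_discrete

theorem div_mul_relRisk_sub_one_div_relRisk {a p c q y : ℝ} (h₁ : 0 < (a * p + q) / p)
    (h₀ : 0 < a * c / c) :
    (a * p + q) / y * ((a * p + q) / p / (a * c / c) - 1) / ((a * p + q) / p / (a * c / c))
      = q / y := by
  have hc : c ≠ 0 := by rintro rfl; simp at h₀
  have hp : p ≠ 0 := by rintro rfl; simp at h₁
  have hx : a * p + q ≠ 0 := by rintro h; simp [h] at h₁
  rw [mul_div_cancel_right₀ a hc] at h₀ ⊢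
  field_simp
  ring

theorem relRisk_estimand_eq_measure_compl_inter_div [IsFiniteMeasure μ] (hA : MeasurableSet A)
    (hAP : μ (A ∩ P) = μ A * μ P) (hAPc : μ (A ∩ Pᶜ) = μ A * μ Pᶜ) (hBP : μ (B ∩ Pᶜ) = 0)
    {R : ℝ} (hR : R = (μ ((A ∪ B) ∩ P)).toReal / (μ P).toReal
      / ((μ ((A ∪ B) ∩ Pᶜ)).toReal / (μ Pᶜ).toReal))
    (h₁ : 0 < (μ ((A ∪ B) ∩ P)).toReal / (μ P).toReal)
    (h₀ : 0 < (μ ((A ∪ B) ∩ Pᶜ)).toReal / (μ Pᶜ).toReal) :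
    (μ ((A ∪ B) ∩ P)).toReal / (μ (A ∪ B)).toReal * (R - 1) / R
      = (μ (Aᶜ ∩ B)).toReal / (μ (A ∪ B)).toReal := by
  rw [measure_union_inter_of_inter_compl_null hA hBP, hAP,
    ENNReal.toReal_add (by finiteness) (by finiteness), ENNReal.toReal_mul] at h₁ hR ⊢
  rw [measure_union_inter_compl_of_inter_compl_null hBP, hAPc, ENNReal.toReal_mul] at h₀ hR
  rw [hR]
  exact div_mul_relRisk_sub_one_div_relRisk h₁ h₀

end Events

theorem stmt4_general {Ω : Type*} [MeasurableSpace Ω] (μ : Measure Ω) [IsProbabilityMeasure μ]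
    (Ynmi Ymi Yobs : Ω → ℕ) (D : Ω → ℝ)
    (hYnmi : Measurable Ynmi)
    (hDnonneg : ∀ ω, 0 ≤ D ω)
    (hnmi01 : ∀ ω, Ynmi ω = 0 ∨ Ynmi ω = 1)
    (hmi01 : ∀ ω, Ymi ω = 0 ∨ Ymi ω = 1)
    (hindep : IndepFun Ynmi (fun ω => (Ymi ω, if 0 < D ω then (1 : ℕ) else 0)) μ)
    (hzero : μ {ω | Ymi ω = 1 ∧ D ω = 0} = 0)
    (hobs : ∀ ω, Yobs ω = min (Ynmi ω + Ymi ω) 1)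
    (pf R : ℝ)
    (hpf : pf = (μ {ω | 0 < D ω ∧ Yobs ω = 1}).toReal / (μ {ω | Yobs ω = 1}).toReal)
    (hR : R = ((μ {ω | Yobs ω = 1 ∧ 0 < D ω}).toReal / (μ {ω | 0 < D ω}).toReal)
            / ((μ {ω | Yobs ω = 1 ∧ D ω = 0}).toReal / (μ {ω | D ω = 0}).toReal))
    (hYD1 : 0 < (μ {ω | Yobs ω = 1 ∧ 0 < D ω}).toReal / (μ {ω | 0 < D ω}).toReal)
    (hYD0 : 0 < (μ {ω | Yobs ω = 1 ∧ D ω = 0}).toReal / (μ {ω | D ω = 0}).toReal) :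
    pf * (R - 1) / R
      = (μ {ω | Ynmi ω = 0 ∧ Ymi ω = 1 ∧ Yobs ω = 1}).toReal / (μ {ω | Yobs ω = 1}).toReal := by
  have hD0 : {ω | D ω = 0} = {ω | 0 < D ω}ᶜ := by
    ext ω; simp [(hDnonneg ω).lt_iff_ne']
  have hYobs : {ω | Yobs ω = 1} = {ω | Ynmi ω = 1} ∪ {ω | Ymi ω = 1} := by
    ext ω; have := hnmi01 ω; have := hmi01 ω
    simp only [Set.mem_ofPred_eq, Set.mem_union, hobs]; omega
  have hMAFF :
      {ω | Ynmi ω = 0 ∧ Ymi ω = 1 ∧ Yobs ω = 1} = {ω | Ynmi ω = 1}ᶜ ∩ {ω | Ymi ω = 1} := by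
    ext ω; have := hnmi01 ω
    simp only [Set.mem_ofPred_eq, Set.mem_inter_iff, Set.mem_compl_iff, hobs]; omega
  obtain ⟨hAP, hAPc⟩ := (hindep.comp measurable_id measurable_snd).measure_inter_setOf_eq_mul
    (measurableSet_singleton 1)
  rw [Set.ofPred_and, Set.inter_comm] at hpf
  simp only [Set.ofPred_and, hYobs, hD0] at hpf hR hYD1 hYD0
  rw [hpf, hYobs, hMAFF]
  exact relRisk_estimand_eq_measure_compl_inter_div (hYnmi (measurableSet_singleton 1)) hAP hAPc
    (hD0 ▸ hzero) hR hYD1 hYD0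

theorem stmt4 {Ω : Type*} [MeasurableSpace Ω] (μ : Measure Ω) [IsProbabilityMeasure μ]
    (Ynmi Ymi Yobs : Ω → ℕ) (D : Ω → ℝ)
    (hYnmi : Measurable Ynmi) (hYmi : Measurable Ymi) (hD : Measurable D)
    (hDnonneg : ∀ ω, 0 ≤ D ω)
    (hnmi01 : ∀ ω, Ynmi ω = 0 ∨ Ynmi ω = 1)
    (hmi01 : ∀ ω, Ymi ω = 0 ∨ Ymi ω = 1)
    (hindep : IndepFun Ynmi (fun ω => (Ymi ω, if 0 < D ω then (1 : ℕ) else 0)) μ)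
    (hzero : μ {ω | Ymi ω = 1 ∧ D ω = 0} = 0)
    (hobs : ∀ ω, Yobs ω = min (Ynmi ω + Ymi ω) 1)
    (hD0 : 0 < (μ {ω | D ω = 0}).toReal)
    (hDpos : 0 < (μ {ω | 0 < D ω}).toReal)
    (hY1 : 0 < (μ {ω | Yobs ω = 1}).toReal)
    (pf R : ℝ)
    (hpf : pf = (μ {ω | 0 < D ω ∧ Yobs ω = 1}).toReal / (μ {ω | Yobs ω = 1}).toReal)
    (hR : R = ((μ {ω | Yobs ω = 1 ∧ 0 < D ω}).toReal / (μ {ω | 0 < D ω}).toReal)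
            / ((μ {ω | Yobs ω = 1 ∧ D ω = 0}).toReal / (μ {ω | D ω = 0}).toReal))
    (hYD1 : 0 < (μ {ω | Yobs ω = 1 ∧ 0 < D ω}).toReal / (μ {ω | 0 < D ω}).toReal)
    (hYD0 : 0 < (μ {ω | Yobs ω = 1 ∧ D ω = 0}).toReal / (μ {ω | D ω = 0}).toReal) :
    pf * (R - 1) / R
      = (μ {ω | Ynmi ω = 0 ∧ Ymi ω = 1 ∧ Yobs ω = 1}).toReal / (μ {ω | Yobs ω = 1}).toReal :=
  stmt4_general μ Ynmi Ymi Yobs D hYnmi hDnonneg hnmi01 hmi01 hindep hzero hobs pf R hpf hR hYD1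
    hYD0
end

section
/- (Proposition 2) Under the same setup as Proposition 1 (Y_nmi independent of (Y_mi, 1_{D>0}), P(Y_mi = 1, D = 0) = 0, Y_obs = min(Y_nmi + Y_mi, 1), all relevant conditioning events having positive probability), define p_f = P(D > 0 | Y_obs = 1), p_a = P(D > 0 | Y_obs = 0), and the odds ratio R* = p_f (1 - p_a) / (p_a (1 - p_f)). Then p_f * (R* - 1)/R* = P(Y_mi = 1) / P(Y_obs = 1). -/
open MeasureTheory ProbabilityTheory

/-!
Given `Yobs = 0`, that is `Ynmi = 0 ∧ Ymi = 0`, the independence of `Ynmi` from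
`(Ymi, 1_{D > 0})` lets the factor `P(Ynmi = 0)` cancel, so `p_a = P(D > 0 | Ymi = 0)`.
Malarial fevers have `D > 0` almost surely, hence
`p_f P(Yobs = 1) + p_a P(Yobs = 0) = P(D > 0) = P(D > 0, Ymi = 0) + P(Ymi = 1)`, which is linear
in `p_f` and rearranges to `(p_f - p_a) P(Yobs = 1) = (1 - p_a) P(Ymi = 1)`. Finally
`p_f (R* - 1) / R* = (p_f - p_a) / (1 - p_a)` for the odds ratio `R*`.
-/

section

variable {Ω : Type*} [MeasurableSpace Ω] {μ : Measure Ω}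

lemma measureReal_and_eq_one_add_and_eq_zero [IsFiniteMeasure μ] {p : Ω → Prop} {f : Ω → ℕ}
    (hf : Measurable f) (hf01 : ∀ ω, f ω = 0 ∨ f ω = 1) :
    μ.real {ω | p ω ∧ f ω = 1} + μ.real {ω | p ω ∧ f ω = 0} = μ.real {ω | p ω} := by
  have hdiff : {ω | p ω} \ {ω | f ω = 1} = {ω | p ω ∧ f ω = 0} := by
    ext ω
    rcases hf01 ω with h | h <;> simp [h]
  rw [← hdiff]
  exact measureReal_inter_add_sdiff (hf (measurableSet_singleton 1))

lemma measureReal_eq_one_add_eq_zero [IsProbabilityMeasure μ] {f : Ω → ℕ}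
    (hf : Measurable f) (hf01 : ∀ ω, f ω = 0 ∨ f ω = 1) :
    μ.real {ω | f ω = 1} + μ.real {ω | f ω = 0} = 1 := by
  simpa using measureReal_and_eq_one_add_and_eq_zero (μ := μ) (p := fun _ => True) hf hf01

lemma measureReal_and_min_add_eq_zero {β : Type*} [MeasurableSpace β]
    {X Y O : Ω → ℕ} {Z : Ω → β} (hindep : IndepFun X (fun ω => (Y ω, Z ω)) μ)
    (hO : ∀ ω, O ω = min (X ω + Y ω) 1) {u : Set β} (hu : MeasurableSet u) :
    μ.real {ω | Z ω ∈ u ∧ O ω = 0} = μ.real {ω | X ω = 0} * μ.real {ω | Z ω ∈ u ∧ Y ω = 0} := by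
  have hsplit : {ω | Z ω ∈ u ∧ O ω = 0}
      = X ⁻¹' {0} ∩ (fun ω => (Y ω, Z ω)) ⁻¹' ({0} ×ˢ u) := by
    ext ω
    simp only [Set.mem_ofPred_eq, Set.mem_inter_iff, Set.mem_preimage, Set.mem_prod,
      Set.mem_singleton_iff, hO, Nat.min_eq_zero_iff, Nat.add_eq_zero_iff, one_ne_zero, or_false]
    tauto
  have hpair : (fun ω => (Y ω, Z ω)) ⁻¹' ({0} ×ˢ u) = {ω | Z ω ∈ u ∧ Y ω = 0} := by
    ext ω
    simp [and_comm]
  rw [hsplit, measureReal_def, hindep.measure_inter_preimage_eq_mul _ _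
    (measurableSet_singleton 0) ((measurableSet_singleton 0).prod hu), ENNReal.toReal_mul, hpair]
  rfl

lemma measureReal_and_min_add_eq_zero_div {β : Type*} [MeasurableSpace β]
    {X Y O : Ω → ℕ} {Z : Ω → β} (hindep : IndepFun X (fun ω => (Y ω, Z ω)) μ)
    (hO : ∀ ω, O ω = min (X ω + Y ω) 1) (hO0 : μ.real {ω | O ω = 0} ≠ 0) {u : Set β}
    (hu : MeasurableSet u) :
    μ.real {ω | Z ω ∈ u ∧ O ω = 0} / μ.real {ω | O ω = 0}
      = μ.real {ω | Z ω ∈ u ∧ Y ω = 0} / μ.real {ω | Y ω = 0} := by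
  have hO0_eq : μ.real {ω | O ω = 0} = μ.real {ω | X ω = 0} * μ.real {ω | Y ω = 0} := by
    simpa using measureReal_and_min_add_eq_zero hindep hO MeasurableSet.univ
  rw [hO0_eq] at hO0 ⊢
  rw [measureReal_and_min_add_eq_zero hindep hO hu,
    mul_div_mul_left _ _ (left_ne_zero_of_mul hO0)]

lemma measureReal_pos_and_eq_one {Y : Ω → ℕ} {D : Ω → ℝ} (hDnonneg : ∀ ω, 0 ≤ D ω)
    (hzero : μ {ω | Y ω = 1 ∧ D ω = 0} = 0) :
    μ.real {ω | 0 < D ω ∧ Y ω = 1} = μ.real {ω | Y ω = 1} := by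
  have hdiff : {ω | Y ω = 1} \ {ω | Y ω = 1 ∧ D ω = 0} = {ω | 0 < D ω ∧ Y ω = 1} := by
    ext ω
    simp only [Set.mem_sdiff, Set.mem_ofPred_eq, not_and]
    constructor
    · rintro ⟨hY, hD⟩
      exact ⟨(hDnonneg ω).lt_of_ne' (hD hY), hY⟩
    · rintro ⟨hD, hY⟩
      exact ⟨hY, fun _ => hD.ne'⟩
  rw [← hdiff]
  exact measureReal_congr (sdiff_null_ae_eq_self hzero)

end

lemma mul_oddsRatio_sub_one_div {pf pa : ℝ} (hpf0 : pf ≠ 0) (hpf1 : pf ≠ 1) (hpa0 : pa ≠ 0)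
    (hpa1 : pa ≠ 1) :
    pf * (pf * (1 - pa) / (pa * (1 - pf)) - 1) / (pf * (1 - pa) / (pa * (1 - pf)))
      = (pf - pa) / (1 - pa) := by
  have : 1 - pf ≠ 0 := sub_ne_zero.2 hpf1.symm
  have : 1 - pa ≠ 0 := sub_ne_zero.2 hpa1.symm
  field_simp
  ring

theorem stmt5_general {Ω : Type*} [MeasurableSpace Ω] (μ : Measure Ω) [IsProbabilityMeasure μ]
    (Ynmi Ymi Yobs : Ω → ℕ) (D : Ω → ℝ)
    (hYnmi : Measurable Ynmi) (hYmi : Measurable Ymi)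
    (hDnonneg : ∀ ω, 0 ≤ D ω)
    (hmi01 : ∀ ω, Ymi ω = 0 ∨ Ymi ω = 1)
    (hindep : IndepFun Ynmi (fun ω => (Ymi ω, if 0 < D ω then (1 : ℕ) else 0)) μ)
    (hzero : μ {ω | Ymi ω = 1 ∧ D ω = 0} = 0)
    (hobs : ∀ ω, Yobs ω = min (Ynmi ω + Ymi ω) 1)
    (hY1 : 0 < (μ {ω | Yobs ω = 1}).toReal)
    (hY0 : 0 < (μ {ω | Yobs ω = 0}).toReal)
    (pf pa Rstar : ℝ)
    (hpf : pf = (μ {ω | 0 < D ω ∧ Yobs ω = 1}).toReal / (μ {ω | Yobs ω = 1}).toReal)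
    (hpa : pa = (μ {ω | 0 < D ω ∧ Yobs ω = 0}).toReal / (μ {ω | Yobs ω = 0}).toReal)
    (hRstar : Rstar = pf * (1 - pa) / (pa * (1 - pf)))
    (hpf0 : 0 < pf) (hpf1 : pf < 1) (hpa0 : 0 < pa) (hpa1 : pa < 1) :
    pf * (Rstar - 1) / Rstar
      = (μ {ω | Ymi ω = 1}).toReal / (μ {ω | Yobs ω = 1}).toReal := by
  simp only [← measureReal_def] at hY1 hY0 hpf hpa ⊢
  have hYobs : Measurable Yobs := funext hobs ▸ (hYnmi.add hYmi).min measurable_const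
  have hYobs01 : ∀ ω, Yobs ω = 0 ∨ Yobs ω = 1 := fun ω => by rw [hobs]; omega
  have hpa_mi : pa = μ.real {ω | 0 < D ω ∧ Ymi ω = 0} / μ.real {ω | Ymi ω = 0} := by
    simpa [hpa] using measureReal_and_min_add_eq_zero_div hindep hobs hY0.ne'
      (measurableSet_singleton 1)
  have hq : μ.real {ω | Ymi ω = 0} ≠ 0 := fun h => by
    rw [h, div_zero] at hpa_mi
    exact hpa0.ne' hpa_mi
  have hpos : μ.real {ω | 0 < D ω ∧ Yobs ω = 1} + μ.real {ω | 0 < D ω ∧ Yobs ω = 0}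
      = μ.real {ω | 0 < D ω ∧ Ymi ω = 0} + μ.real {ω | Ymi ω = 1} := by
    rw [measureReal_and_eq_one_add_and_eq_zero hYobs hYobs01,
      ← measureReal_and_eq_one_add_and_eq_zero hYmi hmi01,
      measureReal_pos_and_eq_one hDnonneg hzero, add_comm]
  have hobs_total := measureReal_eq_one_add_eq_zero (μ := μ) hYobs hYobs01
  have hmi_total := measureReal_eq_one_add_eq_zero (μ := μ) hYmi hmi01
  have hpf_obs : pf * μ.real {ω | Yobs ω = 1} = μ.real {ω | 0 < D ω ∧ Yobs ω = 1} := by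
    rw [hpf, div_mul_cancel₀ _ hY1.ne']
  have hpa_obs : pa * μ.real {ω | Yobs ω = 0} = μ.real {ω | 0 < D ω ∧ Yobs ω = 0} := by
    rw [hpa, div_mul_cancel₀ _ hY0.ne']
  have hpa_q : pa * μ.real {ω | Ymi ω = 0} = μ.real {ω | 0 < D ω ∧ Ymi ω = 0} := by
    rw [hpa_mi, div_mul_cancel₀ _ hq]
  rw [hRstar, mul_oddsRatio_sub_one_div hpf0.ne' hpf1.ne hpa0.ne' hpa1.ne,
    div_eq_div_iff (sub_ne_zero.2 hpa1.ne') hY1.ne']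
  linear_combination hpf_obs + hpa_obs + hpos - pa * hobs_total + pa * hmi_total - hpa_q

theorem stmt5 {Ω : Type*} [MeasurableSpace Ω] (μ : Measure Ω) [IsProbabilityMeasure μ]
    (Ynmi Ymi Yobs : Ω → ℕ) (D : Ω → ℝ)
    (hYnmi : Measurable Ynmi) (hYmi : Measurable Ymi) (hD : Measurable D)
    (hDnonneg : ∀ ω, 0 ≤ D ω)
    (hnmi01 : ∀ ω, Ynmi ω = 0 ∨ Ynmi ω = 1)
    (hmi01 : ∀ ω, Ymi ω = 0 ∨ Ymi ω = 1)
    (hindep : IndepFun Ynmi (fun ω => (Ymi ω, if 0 < D ω then (1 : ℕ) else 0)) μ)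
    (hzero : μ {ω | Ymi ω = 1 ∧ D ω = 0} = 0)
    (hobs : ∀ ω, Yobs ω = min (Ynmi ω + Ymi ω) 1)
    (hD0 : 0 < (μ {ω | D ω = 0}).toReal)
    (hDpos : 0 < (μ {ω | 0 < D ω}).toReal)
    (hY1 : 0 < (μ {ω | Yobs ω = 1}).toReal)
    (hY0 : 0 < (μ {ω | Yobs ω = 0}).toReal)
    (pf pa Rstar : ℝ)
    (hpf : pf = (μ {ω | 0 < D ω ∧ Yobs ω = 1}).toReal / (μ {ω | Yobs ω = 1}).toReal)
    (hpa : pa = (μ {ω | 0 < D ω ∧ Yobs ω = 0}).toReal / (μ {ω | Yobs ω = 0}).toReal)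
    (hRstar : Rstar = pf * (1 - pa) / (pa * (1 - pf)))
    (hpf0 : 0 < pf) (hpf1 : pf < 1) (hpa0 : 0 < pa) (hpa1 : pa < 1) :
    pf * (Rstar - 1) / Rstar
      = (μ {ω | Ymi ω = 1}).toReal / (μ {ω | Yobs ω = 1}).toReal :=
  stmt5_general μ Ynmi Ymi Yobs D hYnmi hYmi hDnonneg hmi01 hindep hzero hobs hY1 hY0 pf pa Rstar
    hpf hpa hRstar hpf0 hpf1 hpa0 hpa1
end

section
/- (Proposition 3) Let Y_nmi and Y_mi be independent {0,1}-valued random variables, Y_obs = min(Y_nmi + Y_mi, 1), p = P(Y_obs = 1) with 0 < p < 1, lambda* = P(Y_mi = 1)/p, and lambda = P(Y_nmi = 0, Y_mi = 1 | Y_obs = 1). Then lambda = (lambda* - p * lambda*) / (1 - p * lambda*). -/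
/-!
Write `a = P(Y_nmi = 0)` and `b = P(Y_mi = 1)`. Fever is absent exactly when `Y_nmi = 0` and
`Y_mi = 0`, so independence gives `1 - p = a (1 - b)`, while `λ = a b / p` and `p λ* = b`
(also when `p = 0`, since `b ≤ p`).
Hence `λ* - p λ* = (1 - p) b / p = a (1 - b) b / p`, and dividing by `1 - p λ* = 1 - b`
(nonzero because `p < 1`) leaves `a b / p = λ`.
-/

open MeasureTheory ProbabilityTheory

lemma mul_div_eq_sub_div_one_sub {a b p : ℝ} (h : 1 - p = a * (1 - b)) (hb : b ≠ 1)
    (hbp : p = 0 → b = 0) :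
    a * b / p = (b / p - p * (b / p)) / (1 - p * (b / p)) := by
  have hb' : 1 - b ≠ 0 := sub_ne_zero.2 hb.symm
  rw [← one_sub_mul, h, mul_div_cancel_of_imp' hbp]
  field_simp

namespace ProbabilityTheory

variable {Ω : Type*} [MeasurableSpace Ω] {μ : Measure Ω} {s t : Set Ω}

lemma IndepSet.measureReal_inter_eq_mul (h : IndepSet s t μ) :
    μ.real (s ∩ t) = μ.real s * μ.real t := by
  simp only [measureReal_def, h.measure_inter_eq_mul, ENNReal.toReal_mul]

lemma IndepSet.measureReal_inter_compl_eq_mul [IsFiniteMeasure μ] (h : IndepSet s t μ)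
    (ht : MeasurableSet t) :
    μ.real (s ∩ tᶜ) = μ.real s * (1 - μ.real t) := by
  have hsplit := measureReal_inter_add_sdiff (s := s) (μ := μ) ht
  rw [h.measureReal_inter_eq_mul, Set.sdiff_eq] at hsplit
  linarith

/-- With `N` the event of no non-malarial fever and `M` that of malarial fever, the left side is
the attributable fraction `λ` and the right side its expression through `λ*` and `p`. -/
theorem IndepSet.measureReal_inter_div_eq [IsProbabilityMeasure μ] {N M : Set Ω}
    (h : IndepSet N M μ) (hN : MeasurableSet N) (hM : MeasurableSet M) {p lamStar : ℝ}
    (hp : p = μ.real (N ∩ Mᶜ)ᶜ) (hp1 : p < 1) (hlamStar : lamStar = μ.real M / p) :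
    μ.real (N ∩ M) / p = (lamStar - p * lamStar) / (1 - p * lamStar) := by
  have hcompl : 1 - p = μ.real N * (1 - μ.real M) := by
    rw [hp, probReal_compl_eq_one_sub (hN.inter hM.compl), h.measureReal_inter_compl_eq_mul hM]
    ring
  have hM_le : μ.real M ≤ p :=
    hp ▸ measureReal_mono fun ω hω hω' => hω'.2 hω
  have hM_ne_one : μ.real M ≠ 1 := by
    rintro hM1
    rw [hM1, sub_self, mul_zero] at hcompl
    linarith
  rw [hlamStar, h.measureReal_inter_eq_mul]
  exact mul_div_eq_sub_div_one_sub hcompl hM_ne_one fun hp0 =>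
    le_antisymm (hp0 ▸ hM_le) measureReal_nonneg

end ProbabilityTheory

theorem stmt7_general {Ω : Type*} [MeasurableSpace Ω] (μ : Measure Ω) [IsProbabilityMeasure μ]
    (Ynmi Ymi Yobs : Ω → ℕ)
    (hYnmi : Measurable Ynmi) (hYmi : Measurable Ymi)
    (hmi01 : ∀ ω, Ymi ω = 0 ∨ Ymi ω = 1)
    (hindep : IndepFun Ynmi Ymi μ)
    (hobs : ∀ ω, Yobs ω = min (Ynmi ω + Ymi ω) 1)
    (p lamStar lam : ℝ)
    (hp : p = (μ {ω | Yobs ω = 1}).toReal)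
    (hp1 : p < 1)
    (hlamStar : lamStar = (μ {ω | Ymi ω = 1}).toReal / p)
    (hlam : lam = (μ {ω | Ynmi ω = 0 ∧ Ymi ω = 1 ∧ Yobs ω = 1}).toReal
        / (μ {ω | Yobs ω = 1}).toReal) :
    lam = (lamStar - p * lamStar) / (1 - p * lamStar) := by
  set N := Ynmi ⁻¹' {0}
  set M := Ymi ⁻¹' {1}
  have hfever : {ω | Yobs ω = 1} = (N ∩ Mᶜ)ᶜ := by
    ext ω
    rcases hmi01 ω with h | h <;> simp [N, M, hobs ω, h, Nat.one_le_iff_ne_zero]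
  have hboth : {ω | Ynmi ω = 0 ∧ Ymi ω = 1 ∧ Yobs ω = 1} = N ∩ M := by
    ext ω
    simp +contextual [N, M, hobs ω]
  have hNM : IndepSet N M μ := (indepFun_iff_indepSet_preimage hYnmi hYmi).1 hindep _ _
    (measurableSet_singleton 0) (measurableSet_singleton 1)
  rw [hlam, hboth, ← hp]
  exact hNM.measureReal_inter_div_eq (hYnmi (measurableSet_singleton 0))
    (hYmi (measurableSet_singleton 1)) (hfever ▸ hp) hp1 hlamStar

theorem stmt7 {Ω : Type*} [MeasurableSpace Ω] (μ : Measure Ω) [IsProbabilityMeasure μ]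
    (Ynmi Ymi Yobs : Ω → ℕ)
    (hYnmi : Measurable Ynmi) (hYmi : Measurable Ymi)
    (hnmi01 : ∀ ω, Ynmi ω = 0 ∨ Ynmi ω = 1)
    (hmi01 : ∀ ω, Ymi ω = 0 ∨ Ymi ω = 1)
    (hindep : IndepFun Ynmi Ymi μ)
    (hobs : ∀ ω, Yobs ω = min (Ynmi ω + Ymi ω) 1)
    (p lamStar lam : ℝ)
    (hp : p = (μ {ω | Yobs ω = 1}).toReal)
    (hp0 : 0 < p) (hp1 : p < 1)
    (hlamStar : lamStar = (μ {ω | Ymi ω = 1}).toReal / p)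
    (hlam : lam = (μ {ω | Ynmi ω = 0 ∧ Ymi ω = 1 ∧ Yobs ω = 1}).toReal
        / (μ {ω | Yobs ω = 1}).toReal) :
    lam = (lamStar - p * lamStar) / (1 - p * lamStar) :=
  stmt7_general μ Ynmi Ymi Yobs hYnmi hYmi hmi01 hindep hobs p lamStar lam hp hp1 hlamStar hlam
end

section
/- Let Y_nmi and Y_mi be independent {0,1}-valued random variables with Y_obs = min(Y_nmi + Y_mi, 1), P(Y_obs = 1) > 0, and P(Y_nmi = 1) > 0. Then P(Y_mi = 1)/P(Y_obs = 1) > P(Y_nmi = 0, Y_mi = 1 | Y_obs = 1) whenever P(Y_mi = 1) > 0; i.e., the odds-ratio estimand strictly exceeds the MAFF when the probability of a non-malaria-caused fever is positive. -/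
/-! On the event `Ymi = 1` the observed fever `Yobs` is automatically `1`, so by independence the
numerator on the left is `P(Ynmi = 0) * P(Ymi = 1)`, and `P(Ynmi = 0) ≤ 1 - P(Ynmi = 1) < 1`. -/

open MeasureTheory ProbabilityTheory

section

variable {Ω α β : Type*} [MeasurableSpace Ω] {μ : Measure Ω} [IsProbabilityMeasure μ]

lemma measureReal_lt_one_of_disjoint {s t : Set Ω} (ht : MeasurableSet t) (hst : Disjoint s t)
    (ht_pos : 0 < μ.real t) : μ.real s < 1 :=
  calc μ.real s ≤ μ.real tᶜ := measureReal_mono hst.subset_compl_right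
    _ = 1 - μ.real t := probReal_compl_eq_one_sub ht
    _ < 1 := by linarith

lemma ProbabilityTheory.IndepFun.measureReal_inter_preimage_singleton_lt [MeasurableSpace α]
    [MeasurableSingletonClass α] [MeasurableSpace β] {X : Ω → α} {Y : Ω → β}
    (hXY : IndepFun X Y μ) (hX : Measurable X) {a b : α} (hab : a ≠ b)
    (hb : 0 < μ.real (X ⁻¹' {b})) {B : Set β} (hB : MeasurableSet B)
    (hYB : 0 < μ.real (Y ⁻¹' B)) :
    μ.real (X ⁻¹' {a} ∩ Y ⁻¹' B) < μ.real (Y ⁻¹' B) := by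
  have hXa : μ.real (X ⁻¹' {a}) < 1 :=
    measureReal_lt_one_of_disjoint (hX (measurableSet_singleton b))
      ((Set.disjoint_singleton.mpr hab).preimage X) hb
  calc μ.real (X ⁻¹' {a} ∩ Y ⁻¹' B) = μ.real (X ⁻¹' {a}) * μ.real (Y ⁻¹' B) := by
        simp only [Measure.real, hXY.measure_inter_preimage_eq_mul _ _
          (measurableSet_singleton a) hB, ENNReal.toReal_mul]
    _ < 1 * μ.real (Y ⁻¹' B) := mul_lt_mul_of_pos_right hXa hYB
    _ = μ.real (Y ⁻¹' B) := one_mul _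

end

theorem stmt8_general {Ω : Type*} [MeasurableSpace Ω] (μ : Measure Ω) [IsProbabilityMeasure μ]
    (Ynmi Ymi Yobs : Ω → ℕ)
    (hYnmi : Measurable Ynmi)
    (hindep : IndepFun Ynmi Ymi μ)
    (hobs : ∀ ω, Yobs ω = min (Ynmi ω + Ymi ω) 1)
    (hY1 : 0 < (μ {ω | Yobs ω = 1}).toReal)
    (hnmi_pos : 0 < (μ {ω | Ynmi ω = 1}).toReal)
    (hmi_pos : 0 < (μ {ω | Ymi ω = 1}).toReal) :
    (μ {ω | Ynmi ω = 0 ∧ Ymi ω = 1 ∧ Yobs ω = 1}).toReal / (μ {ω | Yobs ω = 1}).toReal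
      < (μ {ω | Ymi ω = 1}).toReal / (μ {ω | Yobs ω = 1}).toReal := by
  have hset : {ω | Ynmi ω = 0 ∧ Ymi ω = 1 ∧ Yobs ω = 1} = Ynmi ⁻¹' {0} ∩ Ymi ⁻¹' {1} := by
    ext ω
    simp +contextual [hobs ω]
  rw [hset]
  exact div_lt_div_of_pos_right
    (hindep.measureReal_inter_preimage_singleton_lt hYnmi zero_ne_one hnmi_pos
      (measurableSet_singleton 1) hmi_pos) hY1

theorem stmt8 {Ω : Type*} [MeasurableSpace Ω] (μ : Measure Ω) [IsProbabilityMeasure μ]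
    (Ynmi Ymi Yobs : Ω → ℕ)
    (hYnmi : Measurable Ynmi) (hYmi : Measurable Ymi)
    (hnmi01 : ∀ ω, Ynmi ω = 0 ∨ Ynmi ω = 1)
    (hmi01 : ∀ ω, Ymi ω = 0 ∨ Ymi ω = 1)
    (hindep : IndepFun Ynmi Ymi μ)
    (hobs : ∀ ω, Yobs ω = min (Ynmi ω + Ymi ω) 1)
    (hY1 : 0 < (μ {ω | Yobs ω = 1}).toReal)
    (hnmi_pos : 0 < (μ {ω | Ynmi ω = 1}).toReal)
    (hmi_pos : 0 < (μ {ω | Ymi ω = 1}).toReal) :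
    (μ {ω | Ynmi ω = 0 ∧ Ymi ω = 1 ∧ Yobs ω = 1}).toReal / (μ {ω | Yobs ω = 1}).toReal
      < (μ {ω | Ymi ω = 1}).toReal / (μ {ω | Yobs ω = 1}).toReal :=
  stmt8_general μ Ynmi Ymi Yobs hYnmi hindep hobs hY1 hnmi_pos hmi_pos
end

section
/- Let Y_nmi, Y_mi be independent Bernoulli random variables and Y_obs = min(Y_nmi + Y_mi, 1). Suppose additionally D is a nonnegative random variable with {Y_mi = 1} ⊆ {D > 0} a.s. and Y_nmi independent of (Y_mi, D). Then the monotonicity-implied inequality holds: P(D = 0 | Y_obs = 0) ≥ P(D = 0 | Y_obs = 1), provided P(Y_obs = 0) > 0 and P(Y_obs = 1) > 0. -/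
/-!
Write `S = {Y_nmi = 0}`, `B = {Y_mi = 0}` and `A = {Y_mi = 0, D = 0}`, so that `{Y_obs = 0} = S ∩ B`
and, since `Y_mi = 1` forces `D > 0` almost surely, `{D = 0} = A` almost surely. As `S` is independent
of both `A` and `B ⊇ A`,
`P(A | S ∩ B) = P(A) / P(B) ≥ P(A) ≥ P(A) (1 - P(S)) / (1 - P(S) P(B)) = P(A | (S ∩ B)ᶜ)`.
-/

open MeasureTheory ProbabilityTheory

section

variable {Ω : Type*} [MeasurableSpace Ω] {μ : Measure Ω}

theorem ProbabilityTheory.IndepFun.measureReal_inter_preimage_eq_mul {β γ : Type*}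
    [MeasurableSpace β] [MeasurableSpace γ] {f : Ω → β} {g : Ω → γ} (h : IndepFun f g μ)
    {s : Set β} {t : Set γ} (hs : MeasurableSet s) (ht : MeasurableSet t) :
    μ.real (f ⁻¹' s ∩ g ⁻¹' t) = μ.real (f ⁻¹' s) * μ.real (g ⁻¹' t) := by
  simp only [measureReal_def, h.measure_inter_preimage_eq_mul s t hs ht, ENNReal.toReal_mul]

theorem measureReal_inter_compl_div_le_of_indep [IsProbabilityMeasure μ] {S A B : Set Ω}
    (hS : MeasurableSet S) (hB : MeasurableSet B) (hAB : A ⊆ B)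
    (hSA : μ.real (S ∩ A) = μ.real S * μ.real A) (hSB : μ.real (S ∩ B) = μ.real S * μ.real B)
    (hpos : 0 < μ.real (S ∩ B)) :
    μ.real (A ∩ (S ∩ B)ᶜ) / μ.real (S ∩ B)ᶜ ≤ μ.real (A ∩ (S ∩ B)) / μ.real (S ∩ B) := by
  have hE : MeasurableSet (S ∩ B) := hS.inter hB
  have hAE : A ∩ (S ∩ B) = S ∩ A :=
    Set.ext fun _ => ⟨fun h => ⟨h.2.1, h.1⟩, fun h => ⟨h.2, h.1, hAB h.2⟩⟩
  have hnum : μ.real (A ∩ (S ∩ B)ᶜ) = μ.real A - μ.real S * μ.real A := by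
    have := measureReal_inter_add_sdiff (s := A) (μ := μ) hE
    rw [hAE, hSA] at this
    exact eq_sub_of_add_eq' this
  have hden : μ.real (S ∩ B)ᶜ = 1 - μ.real S * μ.real B := by
    rw [measureReal_compl hE, probReal_univ, hSB]
  have hq : 0 < μ.real S := pos_of_mul_pos_left (hSB ▸ hpos) measureReal_nonneg
  have hr : 0 < μ.real B := pos_of_mul_pos_right (hSB ▸ hpos) measureReal_nonneg
  have hq1 : μ.real S ≤ 1 := measureReal_le_one
  have hr1 : μ.real B ≤ 1 := measureReal_le_one
  have ha : 0 ≤ μ.real A := measureReal_nonneg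
  rw [hAE, hSA, hSB, hnum, hden, mul_div_mul_left _ _ hq.ne']
  calc (μ.real A - μ.real S * μ.real A) / (1 - μ.real S * μ.real B)
      ≤ μ.real A := div_le_of_le_mul₀ (by nlinarith) ha (by nlinarith [mul_nonneg ha hq.le])
    _ ≤ μ.real A / μ.real B := le_div_self ha hr hr1

theorem setOf_eq_zero_ae_eq_setOf_eq_zero_and {Y : Ω → ℕ} {D : Ω → ℝ}
    (hY : ∀ ω, Y ω = 0 ∨ Y ω = 1) (hD : μ {ω | Y ω = 1 ∧ ¬ 0 < D ω} = 0) :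
    {ω | D ω = 0} =ᵐ[μ] {ω | Y ω = 0 ∧ D ω = 0} := by
  have hD' : ∀ᵐ ω ∂μ, ¬ (Y ω = 1 ∧ ¬ 0 < D ω) := ae_iff.2 (by simpa only [not_not] using hD)
  refine Filter.eventuallyEq_set.2 ?_
  filter_upwards [hD'] with ω hω
  exact ⟨fun h0 => ⟨(hY ω).resolve_right fun h1 => hω ⟨h1, h0.not_gt⟩, h0⟩, And.right⟩

end

theorem stmt19_general {Ω : Type*} [MeasurableSpace Ω] (μ : Measure Ω) [IsProbabilityMeasure μ]
    (Ynmi Ymi Yobs : Ω → ℕ) (D : Ω → ℝ)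
    (hYnmi : Measurable Ynmi) (hYmi : Measurable Ymi)
    (hmi01 : ∀ ω, Ymi ω = 0 ∨ Ymi ω = 1)
    (hobs : ∀ ω, Yobs ω = min (Ynmi ω + Ymi ω) 1)
    (hsub : μ {ω | Ymi ω = 1 ∧ ¬ 0 < D ω} = 0)
    (hindep : IndepFun Ynmi (fun ω => (Ymi ω, D ω)) μ)
    (hY0 : 0 < (μ {ω | Yobs ω = 0}).toReal) :
    (μ {ω | D ω = 0 ∧ Yobs ω = 1}).toReal / (μ {ω | Yobs ω = 1}).toReal
      ≤ (μ {ω | D ω = 0 ∧ Yobs ω = 0}).toReal / (μ {ω | Yobs ω = 0}).toReal := by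
  set S := Ynmi ⁻¹' {0}
  set B := Ymi ⁻¹' {0}
  have hobs0 : {ω | Yobs ω = 0} = S ∩ B := by
    ext ω
    simp [S, B, hobs ω]
  have hobs1 : {ω | Yobs ω = 1} = (S ∩ B)ᶜ := by
    rw [← hobs0]
    ext ω
    simp only [Set.mem_ofPred_eq, Set.mem_compl_iff, hobs ω]
    omega
  have key := measureReal_inter_compl_div_le_of_indep (hYnmi (measurableSet_singleton 0))
    (hYmi (measurableSet_singleton 0)) (fun _ h => h.1)
    (hindep.measureReal_inter_preimage_eq_mul (measurableSet_singleton 0)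
      ((measurableSet_singleton 0).prod (measurableSet_singleton 0)))
    ((hindep.comp measurable_id measurable_fst).measureReal_inter_preimage_eq_mul
      (measurableSet_singleton 0) (measurableSet_singleton 0))
    (hobs0 ▸ hY0)
  have hD0 := setOf_eq_zero_ae_eq_setOf_eq_zero_and hmi01 hsub
  have hsplit (i : ℕ) : {ω | D ω = 0 ∧ Yobs ω = i} = {ω | D ω = 0} ∩ {ω | Yobs ω = i} := rfl
  simp only [hsplit, hobs0, hobs1, ← measureReal_def]
  rwa [measureReal_congr (hD0.inter (ae_eq_refl (S ∩ B : Set Ω))),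
    measureReal_congr (hD0.inter (ae_eq_refl ((S ∩ B)ᶜ : Set Ω)))]

theorem stmt19 {Ω : Type*} [MeasurableSpace Ω] (μ : Measure Ω) [IsProbabilityMeasure μ]
    (Ynmi Ymi Yobs : Ω → ℕ) (D : Ω → ℝ)
    (hYnmi : Measurable Ynmi) (hYmi : Measurable Ymi) (hD : Measurable D)
    (hDnonneg : ∀ ω, 0 ≤ D ω)
    (hnmi01 : ∀ ω, Ynmi ω = 0 ∨ Ynmi ω = 1)
    (hmi01 : ∀ ω, Ymi ω = 0 ∨ Ymi ω = 1)
    (hindep01 : IndepFun Ynmi Ymi μ)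
    (hobs : ∀ ω, Yobs ω = min (Ynmi ω + Ymi ω) 1)
    (hsub : μ {ω | Ymi ω = 1 ∧ ¬ 0 < D ω} = 0)
    (hindep : IndepFun Ynmi (fun ω => (Ymi ω, D ω)) μ)
    (hY0 : 0 < (μ {ω | Yobs ω = 0}).toReal)
    (hY1 : 0 < (μ {ω | Yobs ω = 1}).toReal) :
    (μ {ω | D ω = 0 ∧ Yobs ω = 1}).toReal / (μ {ω | Yobs ω = 1}).toReal
      ≤ (μ {ω | D ω = 0 ∧ Yobs ω = 0}).toReal / (μ {ω | Yobs ω = 0}).toReal :=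
  stmt19_general μ Ynmi Ymi Yobs D hYnmi hYmi hmi01 hobs hsub hindep hY0
end
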